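/- Let g ≥ 2 be even and k ≥ 1 an integer, with r = k mod (g-1). Define q = ⌊k/(g-1)⌋ - 1 if r = 0 and q = ⌊k/(g-1)⌋ otherwise; A = g/2 if r = 0 or r > g/2, and A = r otherwise; B = g/2 - 1 if r = 0, B = r - g/2 if r > g/2, and B = 0 otherwise. Then the smallest positive integer n with ℓ_g(n) = k is n = g(1 - g^{2q})/(2(1+g)) + A g^{2q} + B g^{2q+1}. -/
import Mathlib


/-- The g-length of n: minimal number of summands ±g^i needed to write n. -/
noncomputable def glen (g n : ℤ) : ℕ :=
  sInf {k : ℕ | ∃ δ : Fin k → ℤ, ∃ e : Fin k → ℕ,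
    (∀ j, δ j = 1 ∨ δ j = -1) ∧ n = ∑ j, δ j * g ^ (e j)}

set_option linter.unusedVariables false



def W (G : ℕ) (n : ℕ) : ℕ :=
  if h : 2 ≤ G ∧ 2 ≤ n then
    if h2 : n / G + 1 < n then
      min (n % G + W G (n / G)) (G - n % G + W G (n / G + 1))
    else W G (n / G)
  else n
termination_by n
decreasing_by
  · exact Nat.div_lt_self (by omega) (by omega)
  · exact h2
  · exact Nat.div_lt_self (by omega) (by omega)

lemma W_small (G : ℕ) {n : ℕ} (hn : n ≤ 1) : W G n = n := by
  rw [W]; rw [dif_neg (by omega)]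

lemma W_eq {G : ℕ} (hG : 2 ≤ G) {n : ℕ} (hn : 2 ≤ n) :
    W G n = min (n % G + W G (n / G)) (G - n % G + W G (n / G + 1)) := by
  conv_lhs => rw [W]
  rw [dif_pos ⟨hG, hn⟩]
  by_cases h2 : n / G + 1 < n
  · rw [dif_pos h2]
  · rw [dif_neg h2]
    have hd2 : n / G ≤ n / 2 := Nat.div_le_div_left hG (by omega)
    have hn2 : n = 2 := by omega
    subst hn2
    have hG2 : G = 2 := by
      by_contra hne
      have : 2 / G = 0 := Nat.div_eq_of_lt (by omega)
      omega
    subst hG2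
    have e1 : W 2 1 = 1 := W_small 2 (by norm_num)
    have e2 : W 2 2 = W 2 1 := by
      rw [W]; rw [dif_pos ⟨by norm_num, by norm_num⟩]; rw [dif_neg (by norm_num)]
    norm_num [e1, e2]

lemma W_le_self {G : ℕ} (hG : 2 ≤ G) : ∀ n, W G n ≤ n := by
  intro n
  induction n using Nat.strong_induction_on with
  | _ n IH =>
    by_cases hn : 2 ≤ n
    · rw [W_eq hG hn]
      have h1 : n / G < n := Nat.div_lt_self (by omega) (by omega)
      have h2 : W G (n / G) ≤ n / G := IH _ h1
      have h3 : n % G + G * (n / G) = n := Nat.mod_add_div n G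
      have h4 : n / G ≤ G * (n / G) := Nat.le_mul_of_pos_left _ (by omega)
      exact le_trans (min_le_left _ _) (by omega)
    · rw [W_small G (by omega)]

lemma W_le_br1 {G : ℕ} (hG : 2 ≤ G) (a c : ℕ) (hc : c < G) :
    W G (G * a + c) ≤ c + W G a := by
  by_cases hn : 2 ≤ G * a + c
  · rw [W_eq hG hn]
    have hmod : (G * a + c) % G = c := by
      rw [Nat.mul_add_mod, Nat.mod_eq_of_lt hc]
    have hdiv : (G * a + c) / G = a := by
      rw [Nat.mul_add_div (by omega), Nat.div_eq_of_lt hc, Nat.add_zero]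
    rw [hmod, hdiv]
    exact min_le_left _ _
  · have ha : a = 0 := by
      by_contra h
      have : G * 1 ≤ G * a := Nat.mul_le_mul_left G (by omega)
      omega
    subst ha
    rw [Nat.mul_zero, Nat.zero_add, W_small G (by omega), W_small G (by omega)]
    omega

lemma W_le_br2 {G : ℕ} (hG : 2 ≤ G) (a c : ℕ) (hc : c ≤ G) :
    W G (G * a + c) ≤ (G - c) + W G (a + 1) := by
  rcases Nat.lt_or_ge c G with hcG | hcG
  · by_cases hn : 2 ≤ G * a + c
    · rw [W_eq hG hn]
      have hmod : (G * a + c) % G = c := by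
        rw [Nat.mul_add_mod, Nat.mod_eq_of_lt hcG]
      have hdiv : (G * a + c) / G = a := by
        rw [Nat.mul_add_div (by omega), Nat.div_eq_of_lt hcG, Nat.add_zero]
      rw [hmod, hdiv]
      exact min_le_right _ _
    · have ha : a = 0 := by
        by_contra h
        have : G * 1 ≤ G * a := Nat.mul_le_mul_left G (by omega)
        omega
      subst ha
      have h1 : W G 1 = 1 := W_small G (le_refl 1)
      rw [Nat.mul_zero, Nat.zero_add, W_small G (by omega), h1]
      omega
  · have hcG' : c = G := by omega
    rw [hcG']
    have : G * a + G = G * (a + 1) + 0 := by ring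
    rw [this]
    have := W_le_br1 hG (a + 1) 0 (by omega)
    omega

lemma W_eq' {G : ℕ} (hG : 2 ≤ G) {a c : ℕ} (hc : c < G) (h2 : 2 ≤ G * a + c) :
    W G (G * a + c) = min (c + W G a) (G - c + W G (a + 1)) := by
  rw [W_eq hG h2]
  have hmod : (G * a + c) % G = c := by rw [Nat.mul_add_mod, Nat.mod_eq_of_lt hc]
  have hdiv : (G * a + c) / G = a := by
    rw [Nat.mul_add_div (by omega), Nat.div_eq_of_lt hc, Nat.add_zero]
  rw [hmod, hdiv]

lemma W_lip {G : ℕ} (hG : 2 ≤ G) : ∀ n, W G (n + 1) ≤ W G n + 1 ∧ W G n ≤ W G (n + 1) + 1 := by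
  intro n
  induction n using Nat.strong_induction_on with
  | _ n IH =>
    by_cases hn : 2 ≤ n
    · set a := n / G with ha
      set c := n % G with hc0
      have hd : G * a + c = n := by rw [ha, hc0]; exact Nat.div_add_mod n G
      have hc : c < G := Nat.mod_lt _ (by omega)
      have halt : a < n := Nat.div_lt_self (by omega) (by omega)
      have hWn : W G n = min (c + W G a) (G - c + W G (a + 1)) := by
        rw [← hd]; exact W_eq' hG hc (by omega)
      have IHa := IH a halt
      rcases Nat.lt_or_ge (c + 1) G with hc1 | hc1
      · have e : n + 1 = G * a + (c + 1) := by omega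
        have hWn1 : W G (n + 1) = min ((c + 1) + W G a) (G - (c + 1) + W G (a + 1)) := by
          rw [e]; exact W_eq' hG hc1 (by omega)
        rw [hWn, hWn1]; omega
      · -- c + 1 = G
        have hcG : c + 1 = G := by omega
        have emul : G * (a + 1) = G * a + G := by ring
        have e : n + 1 = G * (a + 1) + 0 := by omega
        have hWn1 : W G (n + 1) = min (0 + W G (a + 1)) (G - 0 + W G (a + 1 + 1)) := by
          rw [e]; exact W_eq' hG (by omega) (by omega)
        -- need W G (a+1) ≤ W G (a+2) + 1 when a + 1 < n, else a = 0
        by_cases ha0 : a = 0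
        · have w0 : W G a = 0 := by rw [ha0]; exact W_small G (by omega)
          have w1 : W G (a + 1) = 1 := by rw [ha0]; exact W_small G (le_refl 1)
          have w2 : W G (a + 1 + 1) ≤ 2 := by
            rw [ha0]
            simpa using W_le_self hG 2
          rw [hWn, hWn1]
          omega
        · have ha1lt : a + 1 < n := by
            have h2a : 2 * a ≤ G * a := Nat.mul_le_mul_right a hG
            omega
          have IHa1 := IH (a + 1) ha1lt
          rw [hWn, hWn1]
          omega
    · -- n = 0 or 1
      have hW0 : W G 0 = 0 := W_small G (by omega)
      have hW1 : W G 1 = 1 := W_small G (le_refl 1)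
      have hW2 : W G 2 ≤ 2 := W_le_self hG 2
      have e2 : (1:ℕ) + 1 = 2 := rfl
      interval_cases n
      · rw [hW0, hW1]; omega
      · rw [e2, hW1]; omega

lemma W_exact {G : ℕ} (hG : 2 ≤ G) {c : ℕ} (hc : 2 * c ≤ G) : W G c = c := by
  by_cases h2 : 2 ≤ c
  · have h0 : W G 0 = 0 := W_small G (by omega)
    have h1 : W G (0 + 1) = 1 := W_small G (by omega)
    calc W G c = W G (G * 0 + c) := by norm_num
    _ = min (c + W G 0) (G - c + W G (0 + 1)) := W_eq' hG (by omega) (by omega)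
    _ = c := by rw [h0, h1]; omega
  · exact W_small G (by omega)

def WZ (G : ℕ) (x : ℤ) : ℕ := W G x.natAbs

lemma WZ_neg (G : ℕ) (x : ℤ) : WZ G (-x) = WZ G x := by
  unfold WZ; rw [Int.natAbs_neg]

lemma WZ_lip {G : ℕ} (hG : 2 ≤ G) (x : ℤ) :
    WZ G (x + 1) ≤ WZ G x + 1 ∧ WZ G x ≤ WZ G (x + 1) + 1 := by
  unfold WZ
  rcases le_or_gt 0 x with hx | hx
  · have e : (x + 1).natAbs = x.natAbs + 1 := by omega
    rw [e]
    exact W_lip hG x.natAbs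
  · have e : x.natAbs = (x + 1).natAbs + 1 := by omega
    rw [e]
    exact ⟨(W_lip hG ((x + 1).natAbs)).2, (W_lip hG ((x + 1).natAbs)).1⟩

lemma WZ_br1 {G : ℕ} (hG : 2 ≤ G) (m c : ℤ) (h0 : 0 ≤ c) (h1 : c < (G : ℤ)) :
    WZ G ((G : ℤ) * m + c) ≤ c.natAbs + WZ G m := by
  rcases le_or_gt 0 m with hm | hm
  · have hcast : ((G * m.natAbs + c.natAbs : ℕ) : ℤ) = (G : ℤ) * m + c := by
      push_cast
      rw [abs_of_nonneg hm, abs_of_nonneg h0]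
    have e1 : ((G : ℤ) * m + c).natAbs = G * m.natAbs + c.natAbs := by omega
    unfold WZ
    rw [e1]
    exact W_le_br1 hG m.natAbs c.natAbs (by omega)
  · -- m ≤ -1
    set a : ℕ := (-m - 1).natAbs with ha
    set cc : ℕ := ((G : ℤ) - c).natAbs with hcc
    have hcast : ((G * a + cc : ℕ) : ℤ) = -((G : ℤ) * m + c) := by
      push_cast
      rw [show ((a:ℕ):ℤ) = -m - 1 by rw [ha]; exact Int.natAbs_of_nonneg (by omega),
          show ((cc:ℕ):ℤ) = (G:ℤ) - c by rw [hcc]; exact Int.natAbs_of_nonneg (by omega)]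
      ring
    have e1 : ((G : ℤ) * m + c).natAbs = G * a + cc := by omega
    have hccG : cc ≤ G := by omega
    have ha1 : a + 1 = m.natAbs := by omega
    have hGcc : G - cc = c.natAbs := by omega
    unfold WZ
    rw [e1]
    calc W G (G * a + cc) ≤ (G - cc) + W G (a + 1) := W_le_br2 hG a cc hccG
    _ = c.natAbs + W G m.natAbs := by rw [ha1, hGcc]

lemma WZ_br2 {G : ℕ} (hG : 2 ≤ G) (m c : ℤ) (h0 : 0 ≤ c) (h1 : c ≤ (G : ℤ)) :
    WZ G ((G : ℤ) * m + c) ≤ ((G : ℤ) - c).natAbs + WZ G (m + 1) := by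
  rcases eq_or_lt_of_le h0 with hc0 | hc0
  · -- c = 0
    rw [← hc0]
    have h2 : WZ G ((G:ℤ) * m + 0) ≤ (0:ℤ).natAbs + WZ G m := WZ_br1 hG m 0 le_rfl (by omega)
    have h3 := (WZ_lip hG m).2
    have h4 : ((G:ℤ) - 0).natAbs = G := by omega
    rw [h4]
    simp only [Int.natAbs_zero, zero_add] at h2
    omega
  · -- 0 < c : G*m + c = -(G*(-(m+1)) + (G - c))
    have key : (G : ℤ) * m + c = -((G:ℤ) * (-(m+1)) + ((G:ℤ) - c)) := by ring
    rw [key, WZ_neg]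
    rcases lt_or_eq_of_le h1 with h1' | h1'
    · calc WZ G ((G:ℤ) * (-(m+1)) + ((G:ℤ) - c))
          ≤ ((G:ℤ) - c).natAbs + WZ G (-(m+1)) := WZ_br1 hG _ _ (by omega) (by omega)
      _ = ((G:ℤ) - c).natAbs + WZ G (m + 1) := by rw [show -(m+1) = -(m+1) from rfl, WZ_neg]
    · -- c = G
      have hz : (G:ℤ) - c = 0 := by omega
      rw [hz]
      simp only [add_zero, Int.natAbs_zero, zero_add]
      have h5 := WZ_br1 hG (-(m+1)) 0 le_rfl (by omega)
      simp only [add_zero, Int.natAbs_zero, zero_add] at h5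
      calc WZ G ((G:ℤ) * (-(m+1))) ≤ WZ G (-(m+1)) := h5
      _ = WZ G (m+1) := WZ_neg G (m+1)

lemma WZ_ge {G : ℕ} (hG : 2 ≤ G) {x : ℤ} (hx : 2 ≤ x.natAbs) (m c : ℤ)
    (hd : x = (G : ℤ) * m + c) (h0 : 0 ≤ c) (h1 : c < (G : ℤ)) :
    min (c.natAbs + WZ G m) (((G : ℤ) - c).natAbs + WZ G (m + 1)) ≤ WZ G x := by
  rcases le_or_gt 0 x with hxpos | hxneg
  · -- x ≥ 2, so m ≥ 0
    have hm : 0 ≤ m := by nlinarith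
    have hcast : ((G * m.natAbs + c.natAbs : ℕ) : ℤ) = x := by
      push_cast
      rw [abs_of_nonneg hm, abs_of_nonneg h0]
      omega
    have e1 : x.natAbs = G * m.natAbs + c.natAbs := by omega
    have hWx : W G x.natAbs
        = min (c.natAbs + W G m.natAbs) (G - c.natAbs + W G (m.natAbs + 1)) := by
      rw [e1]; exact W_eq' hG (by omega) (by omega)
    have e2 : (m+1).natAbs = m.natAbs + 1 := by omega
    have e3 : ((G:ℤ) - c).natAbs = G - c.natAbs := by omega
    unfold WZ
    rw [hWx, e2, e3]
  · -- x ≤ -2, m < 0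
    have hm : m < 0 := by nlinarith
    rcases eq_or_lt_of_le h0 with hc0 | hc0
    · -- c = 0 : x = G * m
      have hcast : ((G * m.natAbs : ℕ) : ℤ) = -x := by
        push_cast
        rw [abs_of_nonpos (by omega : m ≤ 0), hd, ← hc0]
        ring
      have e1 : x.natAbs = G * m.natAbs + 0 := by omega
      have hWx : W G x.natAbs
          = min (0 + W G m.natAbs) (G - 0 + W G (m.natAbs + 1)) := by
        rw [e1]; exact W_eq' hG (by omega) (by omega)
      have lip := W_lip hG m.natAbs
      have e2 : (m+1).natAbs + 1 = m.natAbs := by omega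
      have lip2 := W_lip hG ((m+1).natAbs)
      rw [e2] at lip2
      have e3 : ((G:ℤ) - c).natAbs = G := by omega
      have e4 : c.natAbs = 0 := by omega
      unfold WZ
      rw [hWx, e3, e4]
      omega
    · -- c ≥ 1
      have hcast : ((G * (m+1).natAbs + ((G:ℤ) - c).natAbs : ℕ) : ℤ) = -x := by
        push_cast
        rw [abs_of_nonpos (show m + 1 ≤ 0 by nlinarith), abs_of_nonneg (show (0:ℤ) ≤ (G:ℤ) - c by omega)]
        rw [hd]; ring
      have e1 : x.natAbs = G * (m+1).natAbs + ((G:ℤ) - c).natAbs := by omega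
      have hWx : W G x.natAbs = min (((G:ℤ) - c).natAbs + W G ((m+1).natAbs))
          (G - ((G:ℤ) - c).natAbs + W G ((m+1).natAbs + 1)) := by
        rw [e1]; exact W_eq' hG (by omega) (by omega)
      have e2 : (m+1).natAbs + 1 = m.natAbs := by omega
      have e3 : G - ((G:ℤ) - c).natAbs = c.natAbs := by omega
      unfold WZ
      rw [hWx, e2, e3]
      omega

lemma WZ_powval {G : ℕ} (hG : 2 ≤ G) : ∀ e : ℕ, WZ G ((G : ℤ) ^ e) ≤ 1 := by
  intro e
  induction e with
  | zero => unfold WZ; simp [W_small G (le_refl 1)]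
  | succ e IH =>
    have h2 : (G:ℤ)^(e+1) = (G:ℤ) * (G:ℤ)^e + 0 := by ring
    rw [h2]
    have := WZ_br1 hG ((G:ℤ)^e) 0 le_rfl (by omega)
    simp only [Int.natAbs_zero, zero_add] at this
    omega

lemma WZ_pow {G : ℕ} (hG : 2 ≤ G) : ∀ e : ℕ, ∀ x : ℤ, WZ G (x + (G : ℤ) ^ e) ≤ WZ G x + 1 := by
  intro e
  induction e with
  | zero => intro x; simpa using (WZ_lip hG x).1
  | succ e IH =>
    intro x
    by_cases hx : 2 ≤ x.natAbs
    · set c : ℤ := x % (G:ℤ) with hc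
      set m : ℤ := x / (G:ℤ) with hm
      have hd : x = (G:ℤ) * m + c := by
        rw [hm, hc]; rw [Int.mul_ediv_add_emod x (G:ℤ)]
      have h0 : 0 ≤ c := Int.emod_nonneg x (by omega)
      have h1 : c < (G:ℤ) := Int.emod_lt_of_pos x (by omega)
      have hmin := WZ_ge hG hx m c hd h0 h1
      have e2 : x + (G:ℤ)^(e+1) = (G:ℤ) * (m + (G:ℤ)^e) + c := by
        rw [hd]; ring
      have b1 : WZ G (x + (G:ℤ)^(e+1)) ≤ c.natAbs + WZ G (m + (G:ℤ)^e) := by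
        rw [e2]; exact WZ_br1 hG _ _ h0 h1
      have b2 : WZ G (x + (G:ℤ)^(e+1)) ≤ ((G:ℤ) - c).natAbs + WZ G (m + (G:ℤ)^e + 1) := by
        rw [e2]
        have := WZ_br2 hG (m + (G:ℤ)^e) c h0 (le_of_lt h1)
        exact this
      have ih1 := IH m
      have ih2 := IH (m + 1)
      have e3 : m + (G:ℤ)^e + 1 = (m + 1) + (G:ℤ)^e := by ring
      rw [e3] at b2
      omega
    · -- x ∈ {-1, 0, 1}
      have hpe := WZ_powval hG (e+1)
      have hb1 : -1 ≤ x := by omega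
      have hb2 : x ≤ 1 := by omega
      interval_cases x
      · -- x = -1
        have e2 : (-1 : ℤ) + (G:ℤ)^(e+1) = (G:ℤ) * ((G:ℤ)^e - 1) + ((G:ℤ) - 1) := by ring
        rw [e2]
        have := WZ_br2 hG ((G:ℤ)^e - 1) ((G:ℤ) - 1) (by omega) (by omega)
        have e3 : (G:ℤ)^e - 1 + 1 = (G:ℤ)^e := by ring
        rw [e3] at this
        have e4 : ((G:ℤ) - ((G:ℤ) - 1)).natAbs = 1 := by omega
        rw [e4] at this
        have hpow := WZ_powval hG e
        have : WZ G ((G:ℤ) * ((G:ℤ)^e - 1) + ((G:ℤ)-1)) ≤ 2 := by omega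
        have hWm1 : WZ G (-1) = 1 := by unfold WZ; simpa using W_small G (le_refl 1)
        omega
      · -- x = 0
        have e2 : (0:ℤ) + (G:ℤ)^(e+1) = (G:ℤ)^(e+1) := by ring
        rw [e2]
        have hW0 : WZ G 0 = 0 := by unfold WZ; simpa using W_small G (by omega : (0:ℕ) ≤ 1)
        omega
      · -- x = 1
        have e2 : (1:ℤ) + (G:ℤ)^(e+1) = (G:ℤ) * ((G:ℤ)^e) + 1 := by ring
        rw [e2]
        have := WZ_br1 hG ((G:ℤ)^e) 1 (by omega) (by omega)
        have hpow := WZ_powval hG e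
        have hW1 : WZ G 1 = 1 := by unfold WZ; simpa using W_small G (le_refl 1)
        have e4 : (1:ℤ).natAbs = 1 := rfl
        rw [e4] at this
        omega

def GRep (g n : ℤ) (k : ℕ) : Prop :=
  ∃ δ : Fin k → ℤ, ∃ e : Fin k → ℕ,
    (∀ j, δ j = 1 ∨ δ j = -1) ∧ n = ∑ j, δ j * g ^ (e j)

lemma grep_zero (g : ℤ) : GRep g 0 0 :=
  ⟨fun j => 1, fun j => 0, fun j => j.elim0, by simp⟩

lemma grep_single (g : ℤ) (e0 : ℕ) : GRep g (g ^ e0) 1 :=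
  ⟨fun _ => 1, fun _ => e0, fun _ => Or.inl rfl, by simp⟩

lemma grep_add {g m n : ℤ} {k₁ k₂ : ℕ} (h₁ : GRep g m k₁) (h₂ : GRep g n k₂) :
    GRep g (m + n) (k₁ + k₂) := by
  obtain ⟨δ₁, e₁, hs₁, he₁⟩ := h₁
  obtain ⟨δ₂, e₂, hs₂, he₂⟩ := h₂
  refine ⟨Fin.addCases δ₁ δ₂, Fin.addCases e₁ e₂, ?_, ?_⟩
  · intro j
    refine Fin.addCases (fun i => ?_) (fun i => ?_) j
    · simpa using hs₁ i
    · simpa using hs₂ i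
  · rw [Fin.sum_univ_add]
    simp only [Fin.addCases_left, Fin.addCases_right]
    rw [he₁, he₂]

lemma grep_neg {g n : ℤ} {k : ℕ} (h : GRep g n k) : GRep g (-n) k := by
  obtain ⟨δ, e, hs, he⟩ := h
  refine ⟨fun j => -δ j, e, fun j => by rcases hs j with h | h <;> simp [h], ?_⟩
  rw [he, ← Finset.sum_neg_distrib]
  congr 1; funext j; ring

lemma grep_scale {g n : ℤ} {k : ℕ} (h : GRep g n k) : GRep g (g * n) k := by
  obtain ⟨δ, e, hs, he⟩ := h
  refine ⟨δ, fun j => e j + 1, hs, ?_⟩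
  rw [he, Finset.mul_sum]
  congr 1; funext j; rw [pow_succ]; ring

lemma grep_nat (g : ℤ) : ∀ c : ℕ, GRep g (c : ℤ) c := by
  intro c
  induction c with
  | zero => exact grep_zero g
  | succ c IH =>
    have := grep_add IH (grep_single g 0)
    simpa using this

lemma grep_int (g : ℤ) (c : ℤ) : GRep g c c.natAbs := by
  rcases le_or_gt 0 c with h | h
  · have := grep_nat g c.natAbs
    rwa [Int.natAbs_of_nonneg h] at this
  · have := grep_neg (grep_nat g c.natAbs)
    rwa [show ((c.natAbs : ℤ)) = -c by omega, neg_neg] at this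

lemma glen_eq (g n : ℤ) : glen g n = sInf {k : ℕ | GRep g n k} := rfl

lemma glen_le {g n : ℤ} {j k : ℕ} (h : GRep g n j) (hjk : j ≤ k) : glen g n ≤ k :=
  le_trans (Nat.sInf_le h) hjk

lemma le_glen {g n : ℤ} {k j : ℕ} (hne : GRep g n j) (h : ∀ s, GRep g n s → k ≤ s) :
    k ≤ glen g n :=
  le_csInf ⟨j, hne⟩ h

lemma grep_WZ {G : ℕ} (hG : 2 ≤ G) :
    ∀ (k : ℕ) (δ : Fin k → ℤ) (e : Fin k → ℕ), (∀ j, δ j = 1 ∨ δ j = -1) →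
    WZ G (∑ j, δ j * (G : ℤ) ^ (e j)) ≤ k := by
  intro k
  induction k with
  | zero =>
    intro δ e hδ
    simp only [Finset.univ_eq_empty, Finset.sum_empty]
    unfold WZ
    simpa using W_small G (by omega : (0:ℕ) ≤ 1)
  | succ k IH =>
    intro δ e hδ
    rw [Fin.sum_univ_castSucc]
    set y := ∑ j : Fin k, δ j.castSucc * (G:ℤ) ^ (e j.castSucc) with hy
    have hyW : WZ G y ≤ k := IH _ _ (fun j => hδ j.castSucc)
    rcases hδ (Fin.last k) with h | h
    · rw [h, one_mul]
      have := WZ_pow hG (e (Fin.last k)) y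
      omega
    · rw [h, neg_one_mul]
      have e1 : y + -(G:ℤ) ^ (e (Fin.last k)) = -((-y) + (G:ℤ) ^ (e (Fin.last k))) := by ring
      rw [e1, WZ_neg]
      have := WZ_pow hG (e (Fin.last k)) (-y)
      rw [WZ_neg] at this
      omega

def Gs (g h T : ℤ) : ℕ → ℤ
  | 0 => T
  | j+1 => h - g * Gs g h T j

lemma Gs_succ (g h T : ℤ) (j : ℕ) : Gs g h T (j+1) = h - g * Gs g h T j := rfl

lemma Gs_sign {G H : ℕ} (hH : 1 ≤ H) (hG2 : G = 2*H) {T : ℤ} (hT : 1 ≤ T) :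
    ∀ j, (j % 2 = 0 → 1 ≤ Gs (G:ℤ) (H:ℤ) T j) ∧ (j % 2 = 1 → Gs (G:ℤ) (H:ℤ) T j ≤ -1) := by
  have hGH : (G:ℤ) = 2 * (H:ℤ) := by exact_mod_cast congrArg (Nat.cast : ℕ → ℤ) hG2
  have hHZ : (1:ℤ) ≤ (H:ℤ) := by exact_mod_cast hH
  intro j
  induction j with
  | zero => exact ⟨fun _ => hT, fun h => by simp at h⟩
  | succ j IH =>
    rcases Nat.mod_two_eq_zero_or_one j with hpar | hpar
    · have h1 : 1 ≤ Gs (G:ℤ) (H:ℤ) T j := IH.1 hpar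
      constructor
      · intro hc; omega
      · intro _
        rw [Gs_succ]
        nlinarith
    · have h1 : Gs (G:ℤ) (H:ℤ) T j ≤ -1 := IH.2 hpar
      constructor
      · intro _
        rw [Gs_succ]
        nlinarith
      · intro hc; omega

lemma lb_main {G H : ℕ} (hH : 1 ≤ H) (hG2 : G = 2*H) (a b : ℕ) (ha1 : 1 ≤ a) (haH : a ≤ H)
    (hb : b + 1 ≤ H ∨ b = 0) (hba : b = 0 ∨ a = H) :
    ∀ j, (a + b + (H-1)*j + j/2
            ≤ W G ((Gs (G:ℤ) (H:ℤ) ((a : ℤ) + (b:ℤ) * (G:ℤ)) j).natAbs))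
       ∧ (a + b + (H-1)*j + j/2
            ≤ W G ((Gs (G:ℤ) (H:ℤ) ((a : ℤ) + (b:ℤ) * (G:ℤ)) j - 1).natAbs) + (1 - j % 2)) := by
  have hG : 2 ≤ G := by omega
  have hGHZ : (G:ℤ) = 2*(H:ℤ) := by exact_mod_cast congrArg (Nat.cast : ℕ → ℤ) hG2
  set T : ℤ := (a:ℤ) + (b:ℤ)*(G:ℤ) with hTdef
  have hbG : (0:ℤ) ≤ (b:ℤ) * (G:ℤ) := by positivity
  have hT1 : 1 ≤ T := by rw [hTdef]; omega
  have hsign := Gs_sign hH hG2 hT1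
  intro j
  induction j with
  | zero =>
    have hcast : ((a + b*G : ℕ) : ℤ) = T := by rw [hTdef]; push_cast; ring
    have hTn : T.natAbs = a + b*G := by omega
    have hTn1 : (T - 1).natAbs = (a - 1) + b*G := by
      have hc2 : (((a-1) + b*G : ℕ) : ℤ) = T - 1 := by
        rw [hTdef]; push_cast [Nat.cast_sub ha1]; ring
      omega
    simp only [Gs, Nat.mul_zero, Nat.add_zero, Nat.zero_div, Nat.mod_self]
    rw [hTn, hTn1]
    rcases hba with hb0 | haH'
    · subst hb0
      simp only [Nat.zero_mul, Nat.add_zero]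
      have w1 : W G a = a := W_exact hG (by omega)
      have w2 : W G (a - 1) = a - 1 := W_exact hG (by omega)
      rw [w1, w2]
      omega
    · -- a = H
      by_cases hb1 : b = 0
      · subst hb1
        simp only [Nat.zero_mul, Nat.add_zero]
        have w1 : W G a = a := W_exact hG (by omega)
        have w2 : W G (a - 1) = a - 1 := W_exact hG (by omega)
        rw [w1, w2]
        omega
      · have hbge : 1 ≤ b := by omega
        have hH2 : 2 ≤ H := by omega
        have hGb : G * 1 ≤ G * b := Nat.mul_le_mul_left _ hbge
        have e1 : a + b * G = G * b + a := by ring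
        have e2 : (a - 1) + b * G = G * b + (a - 1) := by
          rw [Nat.mul_comm b G]; omega
        rw [e1, e2]
        have wb : W G b = b := W_exact hG (by omega)
        have wb1 : W G (b+1) = b+1 := W_exact hG (by omega)
        have w1 : W G (G * b + a) = min (a + W G b) (G - a + W G (b+1)) :=
          W_eq' hG (by omega) (by omega)
        have w2 : W G (G * b + (a-1)) = min ((a-1) + W G b) (G - (a-1) + W G (b+1)) :=
          W_eq' hG (by omega) (by omega)
        rw [w1, w2, wb, wb1]
        omega
  | succ j IH =>
    have hmulsucc : (H-1)*(j+1) = (H-1)*j + (H-1) := by rw [Nat.mul_add, Nat.mul_one]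
    rcases Nat.mod_two_eq_zero_or_one j with hpar | hpar
    · -- j even
      have ht1 : 1 ≤ Gs (G:ℤ) (H:ℤ) T j := (hsign j).1 hpar
      set t : ℤ := Gs (G:ℤ) (H:ℤ) T j with htdef
      set P : ℕ := t.natAbs with hPdef
      have hPt : (P:ℤ) = t := by omega
      have hP1 : 1 ≤ P := by omega
      have htm1 : (t - 1).natAbs = P - 1 := by omega
      obtain ⟨IH1, IH2⟩ := IH
      rw [htm1] at IH2
      rw [hpar] at IH2
      -- Gs (j+1) = H - G * t
      have hgs1 : Gs (G:ℤ) (H:ℤ) T (j+1) = (H:ℤ) - (G:ℤ) * t := Gs_succ _ _ _ j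
      have hc1 : ((G*(P-1) + H : ℕ) : ℤ) = -(Gs (G:ℤ) (H:ℤ) T (j+1)) := by
        rw [hgs1]
        push_cast [Nat.cast_sub hP1]
        linear_combination (G:ℤ)*hPt - hGHZ
      have hn1 : (Gs (G:ℤ) (H:ℤ) T (j+1)).natAbs = G*(P-1) + H := by omega
      have hc2 : ((G*(P-1) + (H+1) : ℕ) : ℤ) = -(Gs (G:ℤ) (H:ℤ) T (j+1) - 1) := by
        rw [hgs1]
        push_cast [Nat.cast_sub hP1]
        linear_combination (G:ℤ)*hPt - hGHZ
      have hn2 : (Gs (G:ℤ) (H:ℤ) T (j+1) - 1).natAbs = G*(P-1) + (H+1) := by omega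
      have hdiv : (j+1)/2 = j/2 := by omega
      have hmod : (j+1) % 2 = 1 := by omega
      constructor
      · -- x step
        rw [hn1]
        by_cases h2 : 2 ≤ G*(P-1) + H
        · have hw := W_eq' hG (show H < G by omega) (a := P-1) h2
          have hPP : P - 1 + 1 = P := by omega
          rw [hPP] at hw
          rw [hw]
          omega
        · -- H = 1, P = 1
          have hGP : G*(P-1) = 0 := by omega
          have hH1 : H = 1 := by omega
          have hval : G*(P-1) + H = 1 := by omega
          rw [hval, W_small G (le_refl 1)]
          have hzj : (H-1)*j = 0 := by rw [hH1]; simp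
          have hzj1 : (H-1)*(j+1) = 0 := by rw [hH1]; simp
          have hP1' : P = 1 := by
            rcases Nat.eq_zero_or_pos (P-1) with h | h
            · omega
            · have : G*1 ≤ G*(P-1) := Nat.mul_le_mul_left _ h
              omega
          have hx1 : W G P = 1 := by rw [hP1']; exact W_small G (le_refl 1)
          rw [hx1] at IH1
          omega
      · -- y step
        rw [hn2, hmod]
        by_cases hH2 : 2 ≤ H
        · have h2 : 2 ≤ G*(P-1) + (H+1) := by omega
          have hw := W_eq' hG (show H+1 < G by omega) (a := P-1) h2
          have hPP : P - 1 + 1 = P := by omega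
          rw [hPP] at hw
          rw [hw]
          omega
        · -- H = 1, G = 2
          have hH1 : H = 1 := by omega
          have hGval : G = 2 := by omega
          subst hGval
          have e3 : 2*(P-1) + (H+1) = 2*P + 0 := by omega
          rw [e3]
          have hw := W_eq' (le_refl 2) (show 0 < 2 by omega) (a := P) (by omega)
          rw [hw]
          have hlip := (W_lip (le_refl 2) P).2
          have hzj : (H-1)*j = 0 := by rw [hH1]; simp
          have hzj1 : (H-1)*(j+1) = 0 := by rw [hH1]; simp
          omega
    · -- j odd
      have ht1 : Gs (G:ℤ) (H:ℤ) T j ≤ -1 := (hsign j).2 hpar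
      set t : ℤ := Gs (G:ℤ) (H:ℤ) T j with htdef
      set P : ℕ := t.natAbs with hPdef
      have hPt : (P:ℤ) = -t := by omega
      have hP1 : 1 ≤ P := by omega
      have htm1 : (t - 1).natAbs = P + 1 := by omega
      obtain ⟨IH1, IH2⟩ := IH
      rw [htm1] at IH2
      rw [hpar] at IH2
      have hgs1 : Gs (G:ℤ) (H:ℤ) T (j+1) = (H:ℤ) - (G:ℤ) * t := Gs_succ _ _ _ j
      have hc1 : ((G*P + H : ℕ) : ℤ) = Gs (G:ℤ) (H:ℤ) T (j+1) := by
        rw [hgs1]; push_cast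
        linear_combination (G:ℤ)*hPt
      have hn1 : (Gs (G:ℤ) (H:ℤ) T (j+1)).natAbs = G*P + H := by omega
      have hc2 : ((G*P + (H-1) : ℕ) : ℤ) = Gs (G:ℤ) (H:ℤ) T (j+1) - 1 := by
        rw [hgs1]; push_cast [Nat.cast_sub hH]
        linear_combination (G:ℤ)*hPt
      have hn2 : (Gs (G:ℤ) (H:ℤ) T (j+1) - 1).natAbs = G*P + (H-1) := by omega
      have hGP : G*1 ≤ G*P := Nat.mul_le_mul_left _ hP1
      have hdiv : (j+1)/2 = j/2 + 1 := by omega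
      have hmod : (j+1) % 2 = 0 := by omega
      constructor
      · rw [hn1]
        have hw := W_eq' hG (show H < G by omega) (a := P) (by omega)
        rw [hw]
        omega
      · rw [hn2, hmod]
        have hw := W_eq' hG (show H-1 < G by omega) (a := P) (by omega)
        rw [hw]
        omega

lemma grep_congr {g n n' : ℤ} {k : ℕ} (h : n = n') (hr : GRep g n k) : GRep g n' k := h ▸ hr

lemma Gs_zero (g h T : ℤ) : Gs g h T 0 = T := rfl

lemma Gs_step2 (g h T : ℤ) (q : ℕ) :
    Gs g h T (2*(q+1)) = g^2 * Gs g h T (2*q) + h - h*g := by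
  have e : 2*(q+1) = (2*q + 1) + 1 := by ring
  rw [e, Gs_succ, Gs_succ]
  ring

lemma grep_Gs {G H : ℕ} (hH : 1 ≤ H) (hG2 : G = 2*H) (a b : ℕ) :
    ∀ q : ℕ, GRep (G:ℤ) (Gs (G:ℤ) (H:ℤ) ((a:ℤ) + (b:ℤ)*(G:ℤ)) (2*q)) (a + b + q*(G-1)) := by
  intro q
  induction q with
  | zero =>
    simp only [Nat.mul_zero, Nat.zero_mul, Nat.add_zero]
    exact grep_congr (by rw [Gs_zero]; ring)
      (grep_add (grep_nat (G:ℤ) a) (grep_scale (grep_nat (G:ℤ) b)))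
  | succ q IH =>
    have key := grep_add (grep_add (grep_scale (grep_scale IH))
      (grep_scale (grep_int (G:ℤ) (-((H:ℤ)-1))))) (grep_int (G:ℤ) (-(H:ℤ)))
    have hcount : a + b + q*(G-1) + (-((H:ℤ)-1)).natAbs + (-(H:ℤ)).natAbs
        = a + b + (q+1)*(G-1) := by
      have h1 : (-((H:ℤ)-1)).natAbs = H - 1 := by omega
      have h2 : (-(H:ℤ)).natAbs = H := by omega
      rw [h1, h2]
      have h3 : (q+1)*(G-1) = q*(G-1) + (G-1) := by rw [Nat.add_mul, Nat.one_mul]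
      omega
    rw [hcount] at key
    refine grep_congr ?_ key
    rw [Gs_step2]
    have hGHZ : (G:ℤ) = 2*(H:ℤ) := by exact_mod_cast congrArg (Nat.cast : ℕ → ℤ) hG2
    linear_combination hGHZ

lemma alpha_final {G H : ℕ} (hH : 1 ≤ H) (hG2 : G = 2*H) (a b q : ℕ) :
    a + b + (H-1)*(2*q) + (2*q)/2 = a + b + q*(G-1) := by
  have h1 : G - 1 = 2*(H-1) + 1 := by omega
  have h2 : (2*q)/2 = q := by omega
  rw [h1, h2]
  have : (H-1)*(2*q) + q = q*(2*(H-1)+1) := by ring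
  omega

lemma ub_main {G H : ℕ} (hH : 1 ≤ H) (hG2 : G = 2*H) (a b : ℕ) (ha1 : 1 ≤ a) (haH : a ≤ H)
    (hb : b + 1 ≤ H ∨ b = 0) (hba : b = 0 ∨ a = H) :
    ∀ q : ℕ, ∀ m : ℤ, 0 ≤ m → m < Gs (G:ℤ) (H:ℤ) ((a:ℤ)+(b:ℤ)*(G:ℤ)) (2*q) →
      ∃ j : ℕ, j + 1 ≤ a + b + q*(G-1) ∧ GRep (G:ℤ) m j := by
  have hG : 2 ≤ G := by omega
  have hGHZ : (G:ℤ) = 2*(H:ℤ) := by exact_mod_cast congrArg (Nat.cast : ℕ → ℤ) hG2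
  have hHZ : (1:ℤ) ≤ (H:ℤ) := by exact_mod_cast hH
  have hgg0 : (0:ℤ) ≤ (G:ℤ) := by omega
  set T : ℤ := (a:ℤ) + (b:ℤ)*(G:ℤ) with hTdef
  have hbG : (0:ℤ) ≤ (b:ℤ) * (G:ℤ) := by positivity
  have hT1 : 1 ≤ T := by rw [hTdef]; omega
  have hsign := Gs_sign hH hG2 hT1
  intro q
  induction q with
  | zero =>
    intro m hm0 hmT
    simp only [Nat.mul_zero] at hmT
    rw [Gs_zero] at hmT
    rcases hba with hb0 | haH'
    · -- b = 0, T = a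
      subst hb0
      refine ⟨m.natAbs, by simp at hmT ⊢; omega, ?_⟩
      have := grep_int (G:ℤ) m
      exact this
    · -- a = H
      set s : ℤ := m + ((H:ℤ) - 1) with hsdef
      have hs0 : 0 ≤ s := by omega
      have hdm := Int.mul_ediv_add_emod s (G:ℤ)
      set d : ℤ := s / (G:ℤ) with hddef
      set r0 : ℤ := s % (G:ℤ) with hrdef
      have hr0 : 0 ≤ r0 := Int.emod_nonneg s (by omega)
      have hr1 : r0 < (G:ℤ) := Int.emod_lt_of_pos s (by omega)
      have hd0 : 0 ≤ d := Int.ediv_nonneg hs0 hgg0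
      set c0 : ℤ := r0 - ((H:ℤ) - 1) with hc0def
      have hmeq : m = c0 + (G:ℤ) * d := by omega
      have hdb : d ≤ (b:ℤ) := by
        by_contra hcon
        push_neg at hcon
        have h1 : (b:ℤ) + 1 ≤ d := by omega
        have h2 : (G:ℤ) * ((b:ℤ)+1) ≤ (G:ℤ) * d := by
          apply mul_le_mul_of_nonneg_left h1 hgg0
        have h3 : (G:ℤ) * ((b:ℤ)+1) = (b:ℤ)*(G:ℤ) + (G:ℤ) := by ring
        omega
      have hrep : GRep (G:ℤ) m (c0.natAbs + d.natAbs) :=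
        grep_congr (by rw [← hmeq]) (grep_add (grep_int _ c0) (grep_scale (grep_int _ d)))
      refine ⟨c0.natAbs + d.natAbs, ?_, hrep⟩
      rcases eq_or_lt_of_le hdb with hdb' | hdb'
      · -- d = b : c0 = m - b*G ≤ H-1
        have h4 : (G:ℤ) * d = (b:ℤ) * (G:ℤ) := by rw [← hdb']; ring
        omega
      · omega
  | succ q IH =>
    intro m hm0 hmN
    set M : ℤ := Gs (G:ℤ) (H:ℤ) T (2*q) with hMdef
    have hM1 : 1 ≤ M := (hsign (2*q)).1 (by omega)
    have hstep : Gs (G:ℤ) (H:ℤ) T (2*(q+1)) = (G:ℤ)^2 * M + (H:ℤ) - (H:ℤ)*(G:ℤ) :=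
      Gs_step2 _ _ _ q
    have hsq : ((G:ℤ))^2 * M = (G:ℤ) * ((G:ℤ) * M) := by ring
    have hmN' : m < (G:ℤ) * ((G:ℤ) * M) + (H:ℤ) - (H:ℤ)*(G:ℤ) := by
      rw [hstep, hsq] at hmN; omega
    -- first digit
    set s0 : ℤ := m + ((H:ℤ) - 1) with hs0def
    have hdm0 := Int.mul_ediv_add_emod s0 (G:ℤ)
    set d0 : ℤ := s0 / (G:ℤ) with hd0def
    set r0 : ℤ := s0 % (G:ℤ) with hr0def
    have hr00 : 0 ≤ r0 := Int.emod_nonneg s0 (by omega)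
    have hr01 : r0 < (G:ℤ) := Int.emod_lt_of_pos s0 (by omega)
    have hd00 : 0 ≤ d0 := Int.ediv_nonneg (by omega) hgg0
    set c0 : ℤ := r0 - ((H:ℤ) - 1) with hc0def
    -- second digit
    set s1 : ℤ := d0 + ((H:ℤ) - 1) with hs1def
    have hdm1 := Int.mul_ediv_add_emod s1 (G:ℤ)
    set d1 : ℤ := s1 / (G:ℤ) with hd1def
    set r1 : ℤ := s1 % (G:ℤ) with hr1def
    have hr10 : 0 ≤ r1 := Int.emod_nonneg s1 (by omega)
    have hr11 : r1 < (G:ℤ) := Int.emod_lt_of_pos s1 (by omega)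
    have hd10 : 0 ≤ d1 := Int.ediv_nonneg (by omega) hgg0
    set c1 : ℤ := r1 - ((H:ℤ) - 1) with hc1def
    -- relations
    have hm_eq : m = c0 + (G:ℤ) * d0 := by omega
    have hd0_eq : d0 = c1 + (G:ℤ) * d1 := by omega
    have hgd0 : (G:ℤ) * d0 = (G:ℤ) * c1 + (G:ℤ) * ((G:ℤ) * d1) := by
      rw [hd0_eq]; ring
    -- bound on d1
    have hP6 : (G:ℤ) * ((H:ℤ)-1) = (H:ℤ)*(G:ℤ) - (G:ℤ) := by ring
    have hup : (G:ℤ) * ((G:ℤ) * d1) ≤ (G:ℤ)*d0 + (H:ℤ)*(G:ℤ) - (G:ℤ) := by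
      have e1 : (G:ℤ) * d1 ≤ d0 + ((H:ℤ)-1) := by omega
      have e2 := mul_le_mul_of_nonneg_left e1 hgg0
      rw [mul_add] at e2
      omega
    have hd1M : d1 ≤ M - 1 := by
      by_contra hcon
      push_neg at hcon
      have h1 : M ≤ d1 := by omega
      have h2 : (G:ℤ) * M ≤ (G:ℤ) * d1 := mul_le_mul_of_nonneg_left h1 hgg0
      have h3 : (G:ℤ) * ((G:ℤ) * M) ≤ (G:ℤ) * ((G:ℤ) * d1) :=
        mul_le_mul_of_nonneg_left h2 hgg0
      omega
    -- now split on fix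
    by_cases hfix : c0 = (H:ℤ) ∧ c1 = (H:ℤ)
    · -- use digits (-H, -(H-1), d1+1)
      obtain ⟨hf0, hf1⟩ := hfix
      have hval : m = -(H:ℤ) + (G:ℤ) * (-((H:ℤ)-1)) + (G:ℤ)*((G:ℤ)*(d1+1)) := by
        have e7 : (G:ℤ)*((G:ℤ)*(d1+1)) = (G:ℤ)*((G:ℤ)*d1) + (G:ℤ)*(G:ℤ) := by ring
        have e8 : (G:ℤ)*(G:ℤ) = 2*((H:ℤ)*(G:ℤ)) := by linear_combination (G:ℤ)*hGHZ
        have e9 : (G:ℤ)*(-((H:ℤ)-1)) = -((H:ℤ)*(G:ℤ)) + (G:ℤ) := by ring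
        have e10 : (G:ℤ)*c1 = (H:ℤ)*(G:ℤ) := by rw [hf1]; ring
        omega
      have hd1M2 : d1 + 1 ≤ M - 1 := by
        by_contra hcon
        push_neg at hcon
        have h1 : M - 1 ≤ d1 := by omega
        have h2 : (G:ℤ) * (M-1) ≤ (G:ℤ) * d1 := mul_le_mul_of_nonneg_left h1 hgg0
        have h3 : (G:ℤ) * ((G:ℤ) * (M-1)) ≤ (G:ℤ) * ((G:ℤ) * d1) :=
          mul_le_mul_of_nonneg_left h2 hgg0
        have h4 : (G:ℤ) * ((G:ℤ) * (M-1)) = (G:ℤ)*((G:ℤ)*M) - (G:ℤ)*(G:ℤ) := by ring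
        have e8 : (G:ℤ)*(G:ℤ) = 2*((H:ℤ)*(G:ℤ)) := by linear_combination (G:ℤ)*hGHZ
        have e10 : (G:ℤ)*c1 = (H:ℤ)*(G:ℤ) := by rw [hf1]; ring
        omega
      obtain ⟨jb, hjb, hrepb⟩ := IH (d1+1) (by omega) (by omega)
      have hrep : GRep (G:ℤ) m ((-(H:ℤ)).natAbs + (-((H:ℤ)-1)).natAbs + jb) :=
        grep_congr (by rw [← hval])
          (grep_add (grep_add (grep_int _ (-(H:ℤ))) (grep_scale (grep_int _ (-((H:ℤ)-1)))))
            (grep_scale (grep_scale hrepb)))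
      refine ⟨_, ?_, hrep⟩
      have hna : (-(H:ℤ)).natAbs = H := by omega
      have hnb : (-((H:ℤ)-1)).natAbs = H - 1 := by omega
      have hmul : (q+1)*(G-1) = q*(G-1) + (G-1) := by rw [Nat.add_mul, Nat.one_mul]
      omega
    · -- weights fine : |c0| + |c1| ≤ G - 1
      have hw : c0.natAbs + c1.natAbs ≤ G - 1 := by omega
      obtain ⟨jb, hjb, hrepb⟩ := IH d1 (by omega) (by omega)
      have hval : m = c0 + (G:ℤ)*c1 + (G:ℤ)*((G:ℤ)*d1) := by omega
      have hrep : GRep (G:ℤ) m (c0.natAbs + c1.natAbs + jb) :=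
        grep_congr (by rw [← hval])
          (grep_add (grep_add (grep_int _ c0) (grep_scale (grep_int _ c1)))
            (grep_scale (grep_scale hrepb)))
      refine ⟨_, ?_, hrep⟩
      have hmul : (q+1)*(G-1) = q*(G-1) + (G-1) := by rw [Nat.add_mul, Nat.one_mul]
      omega

lemma Gs_cast_q (gz hz T : ℤ) (hrel : (2:ℚ) * (hz:ℚ) = (gz:ℚ)) :
    ∀ q' : ℕ, ((Gs gz hz T (2*q') : ℤ) : ℚ) * (2*(1+(gz:ℚ)))
      = (gz:ℚ)*(1 - (gz:ℚ)^(2*q')) + 2*(1+(gz:ℚ))*((T:ℤ):ℚ)*(gz:ℚ)^(2*q') := by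
  have hhq : (hz:ℚ) = (gz:ℚ)/2 := by linarith
  intro q'
  induction q' with
  | zero =>
    rw [Gs_zero]
    norm_num
    ring
  | succ q' IH =>
    rw [Gs_step2]
    have hp : ((gz:ℚ))^(2*(q'+1)) = (gz:ℚ)^(2*q') * (gz:ℚ)^2 := by
      rw [show 2*(q'+1) = 2*q' + 2 by ring, pow_add]
    rw [hp]
    push_cast
    rw [hhq]
    linear_combination ((gz:ℚ)^2) * IH

/-- Formula for the smallest positive integer of g-length k, for even g ≥ 2. -/
theorem smallest_of_glength_even (g : ℤ) (hg : 2 ≤ g) (heven : Even g) (k : ℕ) (hk : 1 ≤ k)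
    (q r A B : ℤ)
    (hr : r = (k : ℤ) % (g - 1))
    (hq : q = if r = 0 then (k : ℤ) / (g - 1) - 1 else (k : ℤ) / (g - 1))
    (hA : A = if r = 0 ∨ g / 2 < r then g / 2 else r)
    (hB : B = if r = 0 then g / 2 - 1 else if g / 2 < r then r - g / 2 else 0)
    (n : ℤ)
    (hn : (n : ℚ) = (g : ℚ) * (1 - (g : ℚ) ^ (2 * q)) / (2 * (1 + (g : ℚ)))
        + (A : ℚ) * (g : ℚ) ^ (2 * q) + (B : ℚ) * (g : ℚ) ^ (2 * q + 1)) :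
    IsLeast {m : ℤ | 0 < m ∧ glen g m = k} n := by
  -- basic setup
  obtain ⟨t, ht⟩ := heven
  have hgh : g = 2 * (g / 2) := by omega
  set G : ℕ := g.toNat with hGdef
  set H : ℕ := (g/2).toNat with hHdef
  have hGg : (G:ℤ) = g := Int.toNat_of_nonneg (by omega)
  have hHh : (H:ℤ) = g/2 := Int.toNat_of_nonneg (by omega)
  have hG2 : G = 2*H := by omega
  have hH1 : 1 ≤ H := by omega
  have hG1 : 2 ≤ G := by omega
  -- r, q facts
  have hg1 : (0:ℤ) < g - 1 := by omega
  have hr0 : 0 ≤ r := by rw [hr]; exact Int.emod_nonneg _ (by omega)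
  have hrlt : r < g - 1 := by rw [hr]; exact Int.emod_lt_of_pos _ hg1
  have hdiv : (g-1) * ((k:ℤ)/(g-1)) + r = (k:ℤ) := by rw [hr]; exact Int.mul_ediv_add_emod _ _
  have hk1 : (1:ℤ) ≤ (k:ℤ) := by exact_mod_cast hk
  have hQ0 : 0 ≤ (k:ℤ)/(g-1) := Int.ediv_nonneg (by omega) (by omega)
  have hq0 : 0 ≤ q := by
    rcases eq_or_ne r 0 with h0 | h0
    · rw [hq, if_pos h0]
      rcases eq_or_lt_of_le hQ0 with hQ | hQ
      · exfalso; rw [← hQ] at hdiv; omega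
      · omega
    · rw [hq, if_neg h0]; exact hQ0
  -- A, B bounds
  have hA1 : 1 ≤ A := by
    rcases eq_or_ne r 0 with h0 | h0
    · rw [hA, if_pos (Or.inl h0)]; omega
    · by_cases h1 : g/2 < r
      · rw [hA, if_pos (Or.inr h1)]; omega
      · rw [hA, if_neg (by tauto)]; omega
  have hAH : A ≤ g/2 := by
    rcases eq_or_ne r 0 with h0 | h0
    · rw [hA, if_pos (Or.inl h0)]
    · by_cases h1 : g/2 < r
      · rw [hA, if_pos (Or.inr h1)]
      · rw [hA, if_neg (by tauto)]; omega
  have hB0 : 0 ≤ B := by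
    rcases eq_or_ne r 0 with h0 | h0
    · rw [hB, if_pos h0]; omega
    · by_cases h1 : g/2 < r
      · rw [hB, if_neg h0, if_pos h1]; omega
      · rw [hB, if_neg h0, if_neg h1]
  have hBH : B + 1 ≤ g/2 ∨ B = 0 := by
    rcases eq_or_ne r 0 with h0 | h0
    · left; rw [hB, if_pos h0]; omega
    · by_cases h1 : g/2 < r
      · left; rw [hB, if_neg h0, if_pos h1]; omega
      · right; rw [hB, if_neg h0, if_neg h1]
  have hBA : B = 0 ∨ A = g/2 := by
    rcases eq_or_ne r 0 with h0 | h0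
    · right; rw [hA, if_pos (Or.inl h0)]
    · by_cases h1 : g/2 < r
      · right; rw [hA, if_pos (Or.inr h1)]
      · left; rw [hB, if_neg h0, if_neg h1]
  -- k identity
  have hkid : (k:ℤ) = A + B + q*(g-1) := by
    rcases eq_or_ne r 0 with h0 | h0
    · rw [hA, if_pos (Or.inl h0), hB, if_pos h0, hq, if_pos h0]
      have : (((k:ℤ)/(g-1)) - 1)*(g-1) = (g-1)*((k:ℤ)/(g-1)) - (g-1) := by ring
      omega
    · have hAB : A + B = r := by
        by_cases h1 : g/2 < r
        · rw [hA, if_pos (Or.inr h1), hB, if_neg h0, if_pos h1]; ring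
        · rw [hA, if_neg (by tauto), hB, if_neg h0, if_neg h1]; ring
      rw [hq, if_neg h0, hAB]
      have : ((k:ℤ)/(g-1))*(g-1) = (g-1)*((k:ℤ)/(g-1)) := by ring
      omega
  -- nat versions
  set a : ℕ := A.toNat with hadef
  set b : ℕ := B.toNat with hbdef
  set q' : ℕ := q.toNat with hq'def
  have haA : (a:ℤ) = A := Int.toNat_of_nonneg (by omega)
  have hbB : (b:ℤ) = B := Int.toNat_of_nonneg hB0
  have hq'q : (q':ℤ) = q := Int.toNat_of_nonneg hq0
  have ha1 : 1 ≤ a := by omega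
  have haH : a ≤ H := by omega
  have hbn : b + 1 ≤ H ∨ b = 0 := by omega
  have hban : b = 0 ∨ a = H := by omega
  set T : ℤ := (a:ℤ) + (b:ℤ)*(G:ℤ) with hTdef
  set N : ℤ := Gs (G:ℤ) (H:ℤ) T (2*q') with hNdef
  have hbG : (0:ℤ) ≤ (b:ℤ) * (G:ℤ) := by positivity
  have hT1 : 1 ≤ T := by omega
  have hsign := Gs_sign hH1 hG2 hT1
  have hN1 : 1 ≤ N := (hsign (2*q')).1 (by omega)
  -- n = N via ℚ
  have hrel : (2:ℚ) * ((H:ℤ):ℚ) = ((G:ℤ):ℚ) := by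
    have : (2:ℤ) * (H:ℤ) = (G:ℤ) := by omega
    exact_mod_cast congrArg (fun z : ℤ => (z:ℚ)) this
  have hgcast := Gs_cast_q (G:ℤ) (H:ℤ) T hrel q'
  have hgq : (((G:ℤ)):ℚ) = (g:ℚ) := by exact_mod_cast congrArg (fun z : ℤ => (z:ℚ)) hGg
  rw [hgq] at hgcast
  -- zpow to npow
  have hz1 : (g:ℚ) ^ ((2:ℤ) * q) = (g:ℚ) ^ (2*q' : ℕ) := by
    rw [show (2:ℤ)*q = ((2*q' : ℕ) : ℤ) by push_cast; omega]
    exact zpow_natCast _ _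
  have hz2 : (g:ℚ) ^ ((2:ℤ) * q + 1) = (g:ℚ) ^ (2*q' + 1 : ℕ) := by
    rw [show (2:ℤ)*q + 1 = ((2*q' + 1 : ℕ) : ℤ) by push_cast; omega]
    exact zpow_natCast _ _
  have hgQ0 : (1:ℚ) + (g:ℚ) ≠ 0 := by
    have : (2:ℚ) ≤ (g:ℚ) := by exact_mod_cast hg
    nlinarith
  have hTZ : T = A + B * g := by
    have e1 : (b:ℤ)*(G:ℤ) = B*g := by rw [hbB, hGg]
    omega
  have hTQ : ((T:ℤ):ℚ) = (A:ℚ) + (B:ℚ)*(g:ℚ) := by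
    rw [hTZ]; push_cast; ring
  have hnN : (n:ℚ) * (2*(1+(g:ℚ))) = ((N:ℤ):ℚ) * (2*(1+(g:ℚ))) := by
    rw [hn, hz1, hz2, hNdef, hgcast, hTQ]
    field_simp
    ring
  have hnNZ : n = N := by
    have h2 : (2*(1+(g:ℚ))) ≠ 0 := by
      intro hcon
      apply hgQ0
      linarith [hcon]
    have := mul_right_cancel₀ h2 hnN
    exact_mod_cast this
  -- k = count
  have hkK : k = a + b + q'*(G-1) := by
    have e : ((a + b + q'*(G-1) : ℕ) : ℤ) = A + B + q*(g-1) := by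
      push_cast [Nat.cast_sub (show 1 ≤ G by omega)]
      rw [haA, hbB, hq'q, hGg]
    omega
  -- conclusion
  constructor
  · constructor
    · omega
    · -- glen g n = k
      have hrepN : GRep (G:ℤ) N (a + b + q'*(G-1)) := grep_Gs hH1 hG2 a b q'
      rw [hGg] at hrepN
      rw [hnNZ]
      apply le_antisymm
      · exact glen_le hrepN (by omega)
      · apply le_glen hrepN
        intro s hs
        obtain ⟨δ, e, hδ, hsum⟩ := hs
        rw [← hGg] at hsum
        have hWle : WZ G N ≤ s := by
          rw [hsum]
          exact grep_WZ hG1 s δ e hδ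
        have hWge : a + b + q'*(G-1) ≤ WZ G N := by
          have hlb := (lb_main hH1 hG2 a b ha1 haH hbn hban (2*q')).1
          have halpha := alpha_final hH1 hG2 a b q'
          have hNe : WZ G N
              = W G ((Gs (G:ℤ) (H:ℤ) ((a:ℤ)+(b:ℤ)*(G:ℤ)) (2*q')).natAbs) := rfl
          omega
        omega
  · -- minimality
    intro m hm
    obtain ⟨hm0, hmk⟩ := hm
    by_contra hcon
    push_neg at hcon
    rw [hnNZ] at hcon
    obtain ⟨j, hj, hrep⟩ := ub_main hH1 hG2 a b ha1 haH hbn hban q' m (by omega) hcon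
    rw [hGg] at hrep
    have : glen g m ≤ j := glen_le hrep (le_refl j)
    omega
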